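/- arXiv:2308.15307 — 2 statements merged into one kernel-verified Lean document; each statement's English description precedes it below -/
import Mathlib

section
/- Define Φ₁ on the closed unit square [0,1]² by Φ₁(x) = A x when x₁ < x₂ and Φ₁(x) = B x when x₁ ≥ x₂, where A = [[1/2, 0], [−1/2, 1]] and B = [[1, −1/2], [0, 1/2]]. Then Φ₁ is well-defined (A x = B x on the diagonal x₁ = x₂), Lipschitz continuous, and is a bijection from the square [0,1]² onto the closed triangle {x ∈ [0,1]² : x₁ + x₂ ≤ 1}, with Lipschitz inverse. -/
noncomputable def Phi1 (x : ℝ × ℝ) : ℝ × ℝ :=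
  if x.1 < x.2 then (x.1 / 2, -x.1 / 2 + x.2) else (x.1 - x.2 / 2, x.2 / 2)

def unitSq : Set (ℝ × ℝ) := {x | x.1 ∈ Set.Icc (0:ℝ) 1 ∧ x.2 ∈ Set.Icc (0:ℝ) 1}

def unitTri : Set (ℝ × ℝ) := {x ∈ unitSq | x.1 + x.2 ≤ 1}

noncomputable def invPhi1 (y : ℝ × ℝ) : ℝ × ℝ := (y.1 + min y.1 y.2, y.2 + min y.1 y.2)

lemma Phi1_eq (x : ℝ × ℝ) : Phi1 x = (x.1 - min x.1 x.2 / 2, x.2 - min x.1 x.2 / 2) := by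
  unfold Phi1
  rcases lt_or_ge x.1 x.2 with h | h
  · rw [if_pos h, min_eq_left h.le, Prod.mk.injEq]
    constructor <;> ring
  · rw [if_neg (not_lt.2 h), min_eq_right h, Prod.mk.injEq]
    constructor <;> ring

lemma Phi1_lipschitz : LipschitzWith 2 Phi1 := by
  apply LipschitzWith.of_dist_le_mul
  intro p q
  rw [Phi1_eq, Phi1_eq, Prod.dist_eq, Prod.dist_eq]
  simp only [Real.dist_eq]
  have hmin : |min p.1 p.2 - min q.1 q.2| ≤ max |p.1 - q.1| |p.2 - q.2| :=
    abs_min_sub_min_le_max _ _ _ _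
  have h1 : |p.1 - q.1| ≤ max |p.1 - q.1| |p.2 - q.2| := le_max_left _ _
  have h2 : |p.2 - q.2| ≤ max |p.1 - q.1| |p.2 - q.2| := le_max_right _ _
  have h0 : (0:ℝ) ≤ max |p.1 - q.1| |p.2 - q.2| := le_trans (abs_nonneg _) h1
  push_cast
  apply max_le
  · have e : p.1 - min p.1 p.2 / 2 - (q.1 - min q.1 q.2 / 2)
        = (p.1 - q.1) + (-(min p.1 p.2 - min q.1 q.2)) / 2 := by ring
    rw [e]
    calc |(p.1 - q.1) + (-(min p.1 p.2 - min q.1 q.2)) / 2|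
        ≤ |p.1 - q.1| + |(-(min p.1 p.2 - min q.1 q.2)) / 2| := abs_add_le _ _
      _ = |p.1 - q.1| + |min p.1 p.2 - min q.1 q.2| / 2 := by rw [abs_div, abs_neg]; norm_num
      _ ≤ 2 * max |p.1 - q.1| |p.2 - q.2| := by linarith
  · have e : p.2 - min p.1 p.2 / 2 - (q.2 - min q.1 q.2 / 2)
        = (p.2 - q.2) + (-(min p.1 p.2 - min q.1 q.2)) / 2 := by ring
    rw [e]
    calc |(p.2 - q.2) + (-(min p.1 p.2 - min q.1 q.2)) / 2|
        ≤ |p.2 - q.2| + |(-(min p.1 p.2 - min q.1 q.2)) / 2| := abs_add_le _ _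
      _ = |p.2 - q.2| + |min p.1 p.2 - min q.1 q.2| / 2 := by rw [abs_div, abs_neg]; norm_num
      _ ≤ 2 * max |p.1 - q.1| |p.2 - q.2| := by linarith

lemma invPhi1_lipschitz : LipschitzWith 2 invPhi1 := by
  apply LipschitzWith.of_dist_le_mul
  intro p q
  rw [Prod.dist_eq, Prod.dist_eq]
  simp only [invPhi1, Real.dist_eq]
  have hmin : |min p.1 p.2 - min q.1 q.2| ≤ max |p.1 - q.1| |p.2 - q.2| :=
    abs_min_sub_min_le_max _ _ _ _
  have h1 : |p.1 - q.1| ≤ max |p.1 - q.1| |p.2 - q.2| := le_max_left _ _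
  have h2 : |p.2 - q.2| ≤ max |p.1 - q.1| |p.2 - q.2| := le_max_right _ _
  have h0 : (0:ℝ) ≤ max |p.1 - q.1| |p.2 - q.2| := le_trans (abs_nonneg _) h1
  push_cast
  apply max_le
  · have e : p.1 + min p.1 p.2 - (q.1 + min q.1 q.2)
        = (p.1 - q.1) + (min p.1 p.2 - min q.1 q.2) := by ring
    rw [e]
    calc |(p.1 - q.1) + (min p.1 p.2 - min q.1 q.2)|
        ≤ |p.1 - q.1| + |min p.1 p.2 - min q.1 q.2| := abs_add_le _ _
      _ ≤ 2 * max |p.1 - q.1| |p.2 - q.2| := by linarith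
  · have e : p.2 + min p.1 p.2 - (q.2 + min q.1 q.2)
        = (p.2 - q.2) + (min p.1 p.2 - min q.1 q.2) := by ring
    rw [e]
    calc |(p.2 - q.2) + (min p.1 p.2 - min q.1 q.2)|
        ≤ |p.2 - q.2| + |min p.1 p.2 - min q.1 q.2| := abs_add_le _ _
      _ ≤ 2 * max |p.1 - q.1| |p.2 - q.2| := by linarith

lemma Phi1_maps : Set.MapsTo Phi1 unitSq unitTri := by
  intro x hx
  obtain ⟨⟨h10, h11⟩, h20, h21⟩ := hx
  unfold Phi1
  rcases lt_or_ge x.1 x.2 with h | h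
  · rw [if_pos h]
    refine ⟨⟨⟨by linarith, by linarith⟩, ⟨by dsimp; linarith, by dsimp; linarith⟩⟩, by dsimp; linarith⟩
  · rw [if_neg (not_lt.2 h)]
    refine ⟨⟨⟨by dsimp; linarith, by dsimp; linarith⟩, ⟨by linarith, by linarith⟩⟩, by dsimp; linarith⟩

lemma inv_maps : Set.MapsTo invPhi1 unitTri unitSq := by
  intro y hy
  obtain ⟨⟨⟨h10, h11⟩, h20, h21⟩, hsum⟩ := hy
  unfold invPhi1
  rcases le_total y.1 y.2 with h | h
  · rw [min_eq_left h]
    exact ⟨⟨by dsimp; linarith, by dsimp; linarith⟩, ⟨by dsimp; linarith, by dsimp; linarith⟩⟩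
  · rw [min_eq_right h]
    exact ⟨⟨by dsimp; linarith, by dsimp; linarith⟩, ⟨by dsimp; linarith, by dsimp; linarith⟩⟩

lemma left_inv : ∀ x : ℝ × ℝ, invPhi1 (Phi1 x) = x := by
  intro x
  rw [Phi1_eq]
  unfold invPhi1
  rcases le_total x.1 x.2 with h | h
  · rw [min_eq_left h]
    dsimp
    rw [min_eq_left (by linarith)]
    rw [Prod.mk.injEq]
    constructor <;> ring
  · rw [min_eq_right h]
    dsimp
    rw [min_eq_right (by linarith)]
    rw [Prod.mk.injEq]
    constructor <;> ring

lemma right_inv : ∀ y : ℝ × ℝ, Phi1 (invPhi1 y) = y := by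
  intro y
  rw [Phi1_eq]
  unfold invPhi1
  rcases le_total y.1 y.2 with h | h
  · rw [min_eq_left h]
    dsimp
    rw [min_eq_left (by linarith)]
    rw [Prod.mk.injEq]
    constructor <;> ring
  · rw [min_eq_right h]
    dsimp
    rw [min_eq_right (by linarith)]
    rw [Prod.mk.injEq]
    constructor <;> ring

/-- `Φ₁` is well defined (the two matrices agree on the diagonal), Lipschitz, and a
bijection from the unit square onto the unit triangle with Lipschitz inverse. -/
theorem Phi1_biLipschitz_square_to_triangle :
    (∀ x : ℝ × ℝ, x.1 = x.2 →
      ((x.1 / 2, -x.1 / 2 + x.2) : ℝ × ℝ) = (x.1 - x.2 / 2, x.2 / 2)) ∧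
    (∃ K : NNReal, LipschitzWith K Phi1) ∧
    Set.BijOn Phi1 unitSq unitTri ∧
    (∃ (g : ℝ × ℝ → ℝ × ℝ) (K' : NNReal),
      Set.InvOn g Phi1 unitSq unitTri ∧ LipschitzOnWith K' g unitTri) := by
  have hinv : Set.InvOn invPhi1 Phi1 unitSq unitTri :=
    ⟨fun x _ => left_inv x, fun y _ => right_inv y⟩
  refine ⟨?_, ⟨2, Phi1_lipschitz⟩, ?_, invPhi1, 2, hinv, invPhi1_lipschitz.lipschitzOnWith⟩
  · intro x hx
    rw [hx, Prod.mk.injEq]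
    constructor <;> ring
  · exact ⟨Phi1_maps, hinv.1.injOn, hinv.2.surjOn inv_maps⟩
end

section
/- There exists a Lipschitz bijection Φ of the closed unit square Ω = [0,1]² onto itself such that Φ does not map the vertex set of the square onto itself; in particular there is a Lipschitz homeomorphism of the square with Φ((1,1)) = (1, 1/2). (Hence the vertex-preservation property of diffeomorphisms of polytopes fails for general Lipschitz bijections.) -/
/-- The vertex set of the unit square. -/
def sqVertices : Set (ℝ × ℝ) := {(0, 0), (1, 0), (0, 1), (1, 1)}

/-!
`vertexSlide` is linear on each triangle of the fan
  `(0,0),(1,0),(1,1)`,  `(0,0),(1,1),(3/4,1)`,  `(0,0),(3/4,1),(0,1)`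
(the lower, middle and upper pieces) and maps it onto the matching triangle of the fan
  `(0,0),(1,0),(1,1/2)`,  `(0,0),(1,1/2),(1,1)`,  `(0,0),(1,1),(0,1)`.
Both fans triangulate the square, so this is a bijection of the square moving the vertex `(1,1)`
to `(1,1/2)`. Each coordinate of the map and of its inverse can be written as a min/max of linear
forms, which makes both Lipschitz at once.
-/

open Set

noncomputable def vertexSlide (x : ℝ × ℝ) : ℝ × ℝ :=
  (max x.1 (min x.2 (4 / 3 * x.1)), min x.2 (max (1 / 2 * x.2) (5 / 2 * x.2 - 2 * x.1)))

noncomputable def vertexSlideInv (y : ℝ × ℝ) : ℝ × ℝ :=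
  (min y.1 (max (3 / 4 * y.1) (5 / 4 * y.1 - 1 / 2 * y.2)), max y.2 (min y.1 (2 * y.2)))

lemma lipschitzWith_const_mul_fst (c : ℝ) : LipschitzWith ‖c‖₊ fun x : ℝ × ℝ => c * x.1 :=
  mul_one ‖c‖₊ ▸ (lipschitzWith_smul c).comp LipschitzWith.prod_fst

lemma lipschitzWith_const_mul_snd (c : ℝ) : LipschitzWith ‖c‖₊ fun x : ℝ × ℝ => c * x.2 :=
  mul_one ‖c‖₊ ▸ (lipschitzWith_smul c).comp LipschitzWith.prod_snd

lemma exists_lipschitzWith_vertexSlide : ∃ K, LipschitzWith K vertexSlide :=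
  ⟨_, (LipschitzWith.prod_fst.max
        (LipschitzWith.prod_snd.min (lipschitzWith_const_mul_fst _))).prodMk
      (LipschitzWith.prod_snd.min ((lipschitzWith_const_mul_snd _).max
        ((lipschitzWith_const_mul_snd _).sub (lipschitzWith_const_mul_fst _))))⟩

lemma exists_lipschitzWith_vertexSlideInv : ∃ K, LipschitzWith K vertexSlideInv :=
  ⟨_, (LipschitzWith.prod_fst.min ((lipschitzWith_const_mul_fst _).max
        ((lipschitzWith_const_mul_fst _).sub (lipschitzWith_const_mul_snd _)))).prodMk
      (LipschitzWith.prod_snd.max (LipschitzWith.prod_fst.min (lipschitzWith_const_mul_snd _)))⟩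

section Pieces

variable {a b : ℝ}

lemma vertexSlide_of_lower (hb : 0 ≤ b) (hba : b ≤ a) : vertexSlide (a, b) = (a, b / 2) := by
  refine Prod.ext ?_ ?_ <;> (simp only [vertexSlide, max_def, min_def]; split_ifs <;> linarith)

lemma vertexSlide_of_middle (hab : a ≤ b) (hba : 3 * b ≤ 4 * a) :
    vertexSlide (a, b) = (b, 5 / 2 * b - 2 * a) := by
  refine Prod.ext ?_ ?_ <;> (simp only [vertexSlide, max_def, min_def]; split_ifs <;> linarith)

lemma vertexSlide_of_upper (ha : 0 ≤ a) (hab : 4 * a ≤ 3 * b) :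
    vertexSlide (a, b) = (4 / 3 * a, b) := by
  refine Prod.ext ?_ ?_ <;> (simp only [vertexSlide, max_def, min_def]; split_ifs <;> linarith)

lemma vertexSlideInv_of_lower (hb : 0 ≤ b) (hba : 2 * b ≤ a) :
    vertexSlideInv (a, b) = (a, 2 * b) := by
  refine Prod.ext ?_ ?_ <;> (simp only [vertexSlideInv, max_def, min_def]; split_ifs <;> linarith)

lemma vertexSlideInv_of_middle (hba : b ≤ a) (hab : a ≤ 2 * b) :
    vertexSlideInv (a, b) = (5 / 4 * a - 1 / 2 * b, a) := by
  refine Prod.ext ?_ ?_ <;> (simp only [vertexSlideInv, max_def, min_def]; split_ifs <;> linarith)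

lemma vertexSlideInv_of_upper (ha : 0 ≤ a) (hab : a ≤ b) :
    vertexSlideInv (a, b) = (3 / 4 * a, b) := by
  refine Prod.ext ?_ ?_ <;> (simp only [vertexSlideInv, max_def, min_def]; split_ifs <;> linarith)

end Pieces

lemma mk_mem_unitSq {a b : ℝ} : (a, b) ∈ unitSq ↔ (0 ≤ a ∧ a ≤ 1) ∧ 0 ≤ b ∧ b ≤ 1 := Iff.rfl

lemma mapsTo_vertexSlide : MapsTo vertexSlide unitSq unitSq := by
  rintro ⟨a, b⟩ ⟨⟨ha0, ha1⟩, hb0, hb1⟩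
  rcases le_total b a with hba | hab
  · rw [vertexSlide_of_lower hb0 hba, mk_mem_unitSq]
    refine ⟨⟨?_, ?_⟩, ?_, ?_⟩ <;> linarith
  rcases le_total (3 * b) (4 * a) with hba' | hab'
  · rw [vertexSlide_of_middle hab hba', mk_mem_unitSq]
    refine ⟨⟨?_, ?_⟩, ?_, ?_⟩ <;> linarith
  · rw [vertexSlide_of_upper ha0 hab', mk_mem_unitSq]
    refine ⟨⟨?_, ?_⟩, ?_, ?_⟩ <;> linarith

lemma mapsTo_vertexSlideInv : MapsTo vertexSlideInv unitSq unitSq := by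
  rintro ⟨a, b⟩ ⟨⟨ha0, ha1⟩, hb0, hb1⟩
  rcases le_total (2 * b) a with hba | hab
  · rw [vertexSlideInv_of_lower hb0 hba, mk_mem_unitSq]
    refine ⟨⟨?_, ?_⟩, ?_, ?_⟩ <;> linarith
  rcases le_total b a with hba' | hab'
  · rw [vertexSlideInv_of_middle hba' hab, mk_mem_unitSq]
    refine ⟨⟨?_, ?_⟩, ?_, ?_⟩ <;> linarith
  · rw [vertexSlideInv_of_upper ha0 hab', mk_mem_unitSq]
    refine ⟨⟨?_, ?_⟩, ?_, ?_⟩ <;> linarith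

lemma leftInvOn_vertexSlideInv_vertexSlide : LeftInvOn vertexSlideInv vertexSlide unitSq := by
  rintro ⟨a, b⟩ ⟨⟨ha0, -⟩, hb0, -⟩
  rcases le_total b a with hba | hab
  · rw [vertexSlide_of_lower hb0 hba, vertexSlideInv_of_lower (by linarith) (by linarith)]
    ring_nf
  rcases le_total (3 * b) (4 * a) with hba' | hab'
  · rw [vertexSlide_of_middle hab hba', vertexSlideInv_of_middle (by linarith) (by linarith)]
    ring_nf
  · rw [vertexSlide_of_upper ha0 hab', vertexSlideInv_of_upper (by linarith) (by linarith)]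
    ring_nf

lemma leftInvOn_vertexSlide_vertexSlideInv : LeftInvOn vertexSlide vertexSlideInv unitSq := by
  rintro ⟨a, b⟩ ⟨⟨ha0, -⟩, hb0, -⟩
  rcases le_total (2 * b) a with hba | hab
  · rw [vertexSlideInv_of_lower hb0 hba, vertexSlide_of_lower (by linarith) (by linarith)]
    ring_nf
  rcases le_total b a with hba' | hab'
  · rw [vertexSlideInv_of_middle hba' hab, vertexSlide_of_middle (by linarith) (by linarith)]
    ring_nf
  · rw [vertexSlideInv_of_upper ha0 hab', vertexSlide_of_upper (by linarith) (by linarith)]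
    ring_nf

/-- There is a Lipschitz bijection of the closed unit square onto itself, with Lipschitz
inverse, that does not map the vertex set onto itself; in particular it sends `(1,1)` to
`(1, 1/2)`. -/
theorem exists_lipschitz_bijection_of_square_not_preserving_vertices :
    ∃ (Φ g : ℝ × ℝ → ℝ × ℝ) (K K' : NNReal),
      LipschitzOnWith K Φ unitSq ∧
      Set.BijOn Φ unitSq unitSq ∧
      Set.InvOn g Φ unitSq unitSq ∧
      LipschitzOnWith K' g unitSq ∧
      Φ (1, 1) = (1, 1/2) ∧
      Φ '' sqVertices ≠ sqVertices := by
  obtain ⟨K, hK⟩ := exists_lipschitzWith_vertexSlide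
  obtain ⟨K', hK'⟩ := exists_lipschitzWith_vertexSlideInv
  have hinv : InvOn vertexSlideInv vertexSlide unitSq unitSq :=
    ⟨leftInvOn_vertexSlideInv_vertexSlide, leftInvOn_vertexSlide_vertexSlideInv⟩
  have hcorner : vertexSlide (1, 1) = (1, 1 / 2) := vertexSlide_of_lower zero_le_one le_rfl
  refine ⟨vertexSlide, vertexSlideInv, K, K', hK.lipschitzOnWith,
    hinv.bijOn mapsTo_vertexSlide mapsTo_vertexSlideInv, hinv, hK'.lipschitzOnWith, hcorner, ?_⟩
  intro himage
  have hmem : ((1 : ℝ), (1 : ℝ) / 2) ∈ sqVertices :=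
    himage ▸ hcorner ▸ mem_image_of_mem vertexSlide (by simp [sqVertices])
  norm_num [sqVertices] at hmem
end
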